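/- arXiv:1809.03619 — 3 statements merged into one kernel-verified Lean document; each statement's English description precedes it below -/
import Mathlib

section
/- If a sequence of positive reals T(n) defined for powers of 3 satisfies T(1) ≥ 1 and T(3m) ≥ 2^{(3m)^2/12} · T(m)^3 for all powers of 3 m, then T(n) ≥ 2^{n^2/8 - n/2} for all n that are powers of 3. -/
theorem stmt_0 (T : ℕ → ℝ)
    (hpos : ∀ n : ℕ, (∃ i : ℕ, n = 3 ^ i) → 0 < T n)
    (h1 : T 1 ≥ 1)
    (hrec : ∀ m : ℕ, (∃ i : ℕ, m = 3 ^ i) →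
      T (3 * m) ≥ (2 : ℝ) ^ ((((3 * m : ℕ) : ℝ) ^ 2) / 12) * (T m) ^ 3) :
    ∀ n : ℕ, (∃ i : ℕ, n = 3 ^ i) →
      T n ≥ (2 : ℝ) ^ (((n : ℝ) ^ 2) / 8 - (n : ℝ) / 2) := by
  have key : ∀ i : ℕ, T (3 ^ i) ≥
      (2 : ℝ) ^ ((((3 ^ i : ℕ) : ℝ) ^ 2) / 8 - ((3 ^ i : ℕ) : ℝ) / 2) := by
    intro i
    induction i with
    | zero =>
      simp only [pow_zero, Nat.cast_one]
      calc (2 : ℝ) ^ ((1:ℝ) ^ 2 / 8 - (1:ℝ) / 2) ≤ 1 := by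
            apply Real.rpow_le_one_of_one_le_of_nonpos (by norm_num) (by norm_num)
        _ ≤ T 1 := h1
    | succ i ih =>
      have hm := hrec (3 ^ i) ⟨i, rfl⟩
      have h3 : 3 * 3 ^ i = 3 ^ (i + 1) := by ring
      rw [h3] at hm
      set m : ℝ := ((3 ^ i : ℕ) : ℝ) with hmdef
      have hM : ((3 ^ (i+1) : ℕ) : ℝ) = 3 * m := by rw [hmdef]; push_cast; ring
      have hTpos : (0:ℝ) < (2 : ℝ) ^ (m ^ 2 / 8 - m / 2) := Real.rpow_pos_of_pos (by norm_num) _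
      have hcube : T (3 ^ i) ^ 3 ≥ ((2 : ℝ) ^ (m ^ 2 / 8 - m / 2)) ^ 3 := by
        apply pow_le_pow_left₀ hTpos.le ih
      have heq : (2 : ℝ) ^ ((((3 ^ (i+1) : ℕ) : ℝ)) ^ 2 / 12) *
          ((2 : ℝ) ^ (m ^ 2 / 8 - m / 2)) ^ 3 =
          (2 : ℝ) ^ ((((3 ^ (i+1) : ℕ) : ℝ)) ^ 2 / 8 - (((3 ^ (i+1) : ℕ) : ℝ)) / 2) := by
        rw [← Real.rpow_natCast ((2:ℝ) ^ (m ^ 2 / 8 - m / 2)) 3, ← Real.rpow_mul (by norm_num),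
          ← Real.rpow_add (by norm_num), hM]
        congr 1
        ring
      calc T (3 ^ (i+1)) ≥ (2 : ℝ) ^ ((((3 ^ (i+1) : ℕ) : ℝ)) ^ 2 / 12) * T (3 ^ i) ^ 3 := hm
        _ ≥ (2 : ℝ) ^ ((((3 ^ (i+1) : ℕ) : ℝ)) ^ 2 / 12) *
            ((2 : ℝ) ^ (m ^ 2 / 8 - m / 2)) ^ 3 := by
            apply mul_le_mul_of_nonneg_left hcube (Real.rpow_pos_of_pos (by norm_num) _).le
        _ = _ := heq
  rintro n ⟨i, rfl⟩
  exact key i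
end

section
/- For all natural numbers n ≥ 1, MacMahon's product P(n,n,n) = ∏_{a=0}^{n-1} ∏_{b=0}^{n-1} ∏_{c=0}^{n-1} (a+b+c+2)/(a+b+c+1) satisfies P(n,n,n) ≥ 2^{n^2}. -/
/-- MacMahon's product formula for the number of rhombic tilings of the
hexagon `H(i,j,k)`. -/
noncomputable def macmahonP (i j k : ℕ) : ℝ :=
  ∏ a ∈ Finset.range i, ∏ b ∈ Finset.range j, ∏ c ∈ Finset.range k,
    ((a + b + c + 2 : ℕ) : ℝ) / ((a + b + c + 1 : ℕ) : ℝ)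

/-- telescoping the inner product -/
lemma tele (m n : ℕ) :
    ∏ c ∈ Finset.range n, ((m + c + 2 : ℕ) : ℝ) / ((m + c + 1 : ℕ) : ℝ)
      = ((m + n + 1 : ℕ) : ℝ) / ((m + 1 : ℕ) : ℝ) := by
  induction n with
  | zero =>
      simp only [Finset.prod_range_zero, Nat.add_zero]
      rw [eq_comm, div_self (by positivity : ((m + 1 : ℕ) : ℝ) ≠ 0)]
  | succ n ih =>
      rw [Finset.prod_range_succ, ih]
      have h1 : ((m + n + 1 : ℕ) : ℝ) ≠ 0 := by positivity
      have h2 : ((m + 1 : ℕ) : ℝ) ≠ 0 := by positivity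
      push_cast at *
      field_simp
      ring

lemma key (n a b : ℕ) (hn : 1 ≤ n) (ha : a < n) (hb : b < n) :
    (4 : ℝ) ≤ (((a + b + n + 1 : ℕ) : ℝ) / ((a + b + 1 : ℕ) : ℝ)) *
      ((((n - 1 - a) + (n - 1 - b) + n + 1 : ℕ) : ℝ) /
       (((n - 1 - a) + (n - 1 - b) + 1 : ℕ) : ℝ)) := by
  have ha' : a ≤ n - 1 := Nat.le_sub_one_of_lt ha
  have hb' : b ≤ n - 1 := Nat.le_sub_one_of_lt hb
  have hca : ((n - 1 - a : ℕ) : ℝ) = (n : ℝ) - 1 - a := by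
    rw [Nat.cast_sub ha', Nat.cast_sub hn]
    push_cast; ring
  have hcb : ((n - 1 - b : ℕ) : ℝ) = (n : ℝ) - 1 - b := by
    rw [Nat.cast_sub hb', Nat.cast_sub hn]
    push_cast; ring
  have hA : (a : ℝ) ≤ (n : ℝ) - 1 := by
    have := (Nat.cast_le (α := ℝ)).mpr ha'
    rw [Nat.cast_sub hn] at this
    simpa using this
  have hB : (b : ℝ) ≤ (n : ℝ) - 1 := by
    have := (Nat.cast_le (α := ℝ)).mpr hb'
    rw [Nat.cast_sub hn] at this
    simpa using this
  have hn1 : (1 : ℝ) ≤ (n : ℝ) := by exact_mod_cast hn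
  push_cast [hca, hcb]
  set A := (a : ℝ); set B := (b : ℝ); set N := (n : ℝ)
  have hA0 : 0 ≤ A := Nat.cast_nonneg a
  have hB0 : 0 ≤ B := Nat.cast_nonneg b
  have hd1 : 0 < A + B + 1 := by linarith
  have hd2 : 0 < (N - 1 - A) + (N - 1 - B) + 1 := by linarith
  rw [div_mul_div_comm, le_div_iff₀ (by positivity)]
  nlinarith [sq_nonneg (A + B - (N - 1 - A) - (N - 1 - B)), mul_pos hd1 hd2]

theorem stmt_4 (n : ℕ) (hn : 1 ≤ n) :
    macmahonP n n n ≥ (2 : ℝ) ^ ((n : ℝ) ^ 2) := by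
  have hP : macmahonP n n n =
      ∏ a ∈ Finset.range n, ∏ b ∈ Finset.range n,
        ((a + b + n + 1 : ℕ) : ℝ) / ((a + b + 1 : ℕ) : ℝ) := by
    unfold macmahonP
    exact Finset.prod_congr rfl fun a _ => Finset.prod_congr rfl fun b _ => tele (a + b) n
  set g : ℕ → ℕ → ℝ := fun a b => ((a + b + n + 1 : ℕ) : ℝ) / ((a + b + 1 : ℕ) : ℝ) with hg
  set P := macmahonP n n n with hPdef
  have hpos : ∀ a b : ℕ, 0 < g a b := fun a b => by
    apply div_pos <;> positivity
  have hPpos : 0 < P := by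
    rw [hP]
    exact Finset.prod_pos fun a _ => Finset.prod_pos fun b _ => hpos a b
  have hrefl : P = ∏ a ∈ Finset.range n, ∏ b ∈ Finset.range n, g (n - 1 - a) (n - 1 - b) := by
    rw [hP]
    rw [← Finset.prod_range_reflect (fun a => ∏ b ∈ Finset.range n, g a b) n]
    exact Finset.prod_congr rfl fun a _ =>
      (Finset.prod_range_reflect (fun b => g (n - 1 - a) b) n).symm
  have hsq : P * P = ∏ a ∈ Finset.range n, ∏ b ∈ Finset.range n,
      g a b * g (n - 1 - a) (n - 1 - b) := by
    nth_rewrite 1 [hP]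
    rw [hrefl]
    rw [← Finset.prod_mul_distrib]
    exact Finset.prod_congr rfl fun a _ => (Finset.prod_mul_distrib).symm
  have hlow : (4 : ℝ) ^ (n * n) ≤ P * P := by
    rw [hsq]
    calc (4 : ℝ) ^ (n * n)
        = ∏ a ∈ Finset.range n, ∏ b ∈ Finset.range n, (4 : ℝ) := by
          simp [pow_mul]
      _ ≤ _ := by
          apply Finset.prod_le_prod
          · intro a _; positivity
          · intro a ha
            apply Finset.prod_le_prod
            · intro b _; norm_num
            · intro b hb
              exact key n a b hn (Finset.mem_range.mp ha) (Finset.mem_range.mp hb)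
  have h2 : (2 : ℝ) ^ ((n : ℝ) ^ 2) = (2 : ℝ) ^ (n * n) := by
    rw [show ((n : ℝ) ^ 2) = ((n * n : ℕ) : ℝ) by push_cast; ring, Real.rpow_natCast]
  rw [ge_iff_le, h2]
  have h4 : (4 : ℝ) ^ (n * n) = ((2 : ℝ) ^ (n * n)) ^ 2 := by
    rw [← pow_mul, show (4:ℝ) = 2^2 by norm_num, ← pow_mul]; ring_nf
  have : ((2 : ℝ) ^ (n * n)) ^ 2 ≤ P ^ 2 := by rw [← h4]; nlinarith [hlow]
  exact (pow_le_pow_iff_left₀ (by positivity) hPpos.le (by norm_num)).mp this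
end

section
/- In the hexagonal construction with 6 parallel strips of unit width axes through the center of a unit regular hexagon H (three strips bounded by pairs of opposite sides of H, three by pairs of opposite short diagonals), the areas a_i of the regions covered by exactly i of the 6 strips satisfy a_4 = a_5 = a_6 = √3/2, and a_4 + a_5 + a_6 = area(H) = 3√3/2. -/
open MeasureTheory Real Set

noncomputable def lmap (q r u v : ℝ) : (ℝ × ℝ) →ₗ[ℝ] (ℝ × ℝ) :=
  Matrix.toLin (Module.Basis.finTwoProd ℝ) (Module.Basis.finTwoProd ℝ) !![q, r; u, v]

lemma lmap_apply (q r u v : ℝ) (p : ℝ × ℝ) :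
    lmap q r u v p = (q * p.1 + r * p.2, u * p.1 + v * p.2) := by
  simp [lmap]

lemma lmap_det (q r u v : ℝ) : LinearMap.det (lmap q r u v) = q * v - r * u := by
  rw [lmap, LinearMap.det_toLin, Matrix.det_fin_two_of]

lemma vol_par (q r u v A B C D : ℝ) (hd : q * v - r * u ≠ 0) (hAB : A ≤ B) :
    volume {p : ℝ × ℝ | (A ≤ q * p.1 + r * p.2 ∧ q * p.1 + r * p.2 ≤ B) ∧
      (C ≤ u * p.1 + v * p.2 ∧ u * p.1 + v * p.2 ≤ D)}
      = ENNReal.ofReal (|(q * v - r * u)⁻¹| * ((B - A) * (D - C))) := by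
  have hs : {p : ℝ × ℝ | (A ≤ q * p.1 + r * p.2 ∧ q * p.1 + r * p.2 ≤ B) ∧
      (C ≤ u * p.1 + v * p.2 ∧ u * p.1 + v * p.2 ≤ D)}
      = (lmap q r u v) ⁻¹' (Icc A B ×ˢ Icc C D) := by
    ext p
    simp only [Set.mem_setOf_eq, Set.mem_preimage, lmap_apply, Set.mem_prod, mem_Icc]
  rw [hs, Measure.addHaar_preimage_linearMap volume (by rw [lmap_det]; exact hd), lmap_det,
    Measure.volume_eq_prod, Measure.prod_prod, Real.volume_Icc, Real.volume_Icc,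
    ← ENNReal.ofReal_mul (by linarith : (0:ℝ) ≤ B - A),
    ← ENNReal.ofReal_mul (abs_nonneg _)]

lemma vol_line (q r c : ℝ) (h : ¬(q = 0 ∧ r = 0)) :
    volume {p : ℝ × ℝ | q * p.1 + r * p.2 = c} = 0 := by
  have hd : q * (-q) - r * r ≠ 0 := by
    intro hc
    have h1 : q * q + r * r = 0 := by nlinarith
    have hq : q = 0 := by nlinarith [sq_nonneg q, sq_nonneg r]
    have hr : r = 0 := by nlinarith [sq_nonneg q, sq_nonneg r]
    exact h ⟨hq, hr⟩
  have hs : {p : ℝ × ℝ | q * p.1 + r * p.2 = c}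
      = (lmap q r r (-q)) ⁻¹' ({c} ×ˢ (univ : Set ℝ)) := by
    ext p
    simp only [Set.mem_setOf_eq, Set.mem_preimage, lmap_apply, Set.mem_prod,
      Set.mem_singleton_iff, Set.mem_univ, and_true]
  rw [hs, Measure.addHaar_preimage_linearMap volume (by rw [lmap_det]; exact hd),
    Measure.volume_eq_prod, Measure.prod_prod]
  simp

lemma meas_strip2 (f : ℝ × ℝ → ℝ) (hf : Measurable f) (A B : ℝ) :
    MeasurableSet {p : ℝ × ℝ | A ≤ f p ∧ f p ≤ B} :=
  (measurableSet_le measurable_const hf).inter (measurableSet_le hf measurable_const)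

lemma card_le_of_not3 (P : Fin 6 → Prop) [DecidablePred P] {i j k : Fin 6}
    (hij : i ≠ j) (hik : i ≠ k) (hjk : j ≠ k)
    (hi : ¬P i) (hj : ¬P j) (hk : ¬P k) : (Finset.univ.filter P).card ≤ 3 := by
  have hsub : Finset.univ.filter P ⊆ ({i, j, k} : Finset (Fin 6))ᶜ := by
    intro x hx
    rw [Finset.mem_filter] at hx
    rw [Finset.mem_compl]
    intro hmem
    simp only [Finset.mem_insert, Finset.mem_singleton] at hmem
    rcases hmem with rfl | rfl | rfl <;> tauto
  calc (Finset.univ.filter P).card ≤ (({i, j, k} : Finset (Fin 6))ᶜ).card :=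
        Finset.card_le_card hsub
    _ = 6 - ({i, j, k} : Finset (Fin 6)).card := by rw [Finset.card_compl]; rfl
    _ ≤ 3 := by
        have : ({i, j, k} : Finset (Fin 6)).card = 3 := by
          rw [Finset.card_insert_of_notMem (by simp [hij, hik]),
            Finset.card_insert_of_notMem (by simp [hjk]), Finset.card_singleton]
        omega

set_option maxHeartbeats 1600000

theorem stmt_8
    (Γ : Fin 6 → Set (ℝ × ℝ))
    -- strip bounded by the lines √3x + y = 0 and √3x + y = 2√3
    (h1 : Γ 0 = {p | 0 ≤ Real.sqrt 3 * p.1 + p.2 ∧ Real.sqrt 3 * p.1 + p.2 ≤ 2 * Real.sqrt 3})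
    -- strip bounded by the lines x + √3y = 1 and x + √3y = 3
    (h2 : Γ 1 = {p | 1 ≤ p.1 + Real.sqrt 3 * p.2 ∧ p.1 + Real.sqrt 3 * p.2 ≤ 3})
    -- strip bounded by the lines y = 0 and y = √3
    (h3 : Γ 2 = {p | 0 ≤ p.2 ∧ p.2 ≤ Real.sqrt 3})
    -- strip bounded by the lines -x + √3y = 0 and -x + √3y = 2
    (h4 : Γ 3 = {p | 0 ≤ -p.1 + Real.sqrt 3 * p.2 ∧ -p.1 + Real.sqrt 3 * p.2 ≤ 2})
    -- strip bounded by the lines -√3x + y = -√3 and -√3x + y = √3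
    (h5 : Γ 4 = {p | -Real.sqrt 3 ≤ -(Real.sqrt 3) * p.1 + p.2 ∧
      -(Real.sqrt 3) * p.1 + p.2 ≤ Real.sqrt 3})
    -- strip bounded by the lines x = 0 and x = 1
    (h6 : Γ 5 = {p | 0 ≤ p.1 ∧ p.1 ≤ 1})
    (a : ℕ → ℝ)
    -- aᵢ is the area of the region covered by exactly i of the 6 strips
    (ha : ∀ i, a i = (volume {p : ℝ × ℝ | Nat.card {j : Fin 6 // p ∈ Γ j} = i}).toReal) :
    a 4 = Real.sqrt 3 / 2 ∧ a 5 = Real.sqrt 3 / 2 ∧ a 6 = Real.sqrt 3 / 2 ∧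
    a 4 + a 5 + a 6 = (volume (Γ 0 ∩ Γ 2 ∩ Γ 4)).toReal ∧
    a 4 + a 5 + a 6 = 3 * Real.sqrt 3 / 2 := by
  classical
  have s3 : Real.sqrt 3 * Real.sqrt 3 = 3 := Real.mul_self_sqrt (by norm_num)
  have s3p : (0:ℝ) < Real.sqrt 3 := Real.sqrt_pos.mpr (by norm_num)
  set s : ℝ := Real.sqrt 3 with hsdef
  -- abbreviations
  set W : Set (ℝ × ℝ) := Γ 0 ∩ Γ 2 ∩ Γ 4 with hWdef
  set SS : Set (ℝ × ℝ) := Γ 1 ∩ Γ 3 ∩ Γ 5 with hSSdef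
  set U : Set (ℝ × ℝ) := (Γ 1 ∩ Γ 3 ∪ Γ 3 ∩ Γ 5) ∪ Γ 1 ∩ Γ 5 with hUdef
  -- rhombi pieces covering W
  set R1 : Set (ℝ × ℝ) := {p | (0 ≤ 0*p.1 + 1*p.2 ∧ 0*p.1 + 1*p.2 ≤ s/2) ∧
      (0 ≤ s*p.1 + (-1)*p.2 ∧ s*p.1 + (-1)*p.2 ≤ s)} with hR1def
  set R2 : Set (ℝ × ℝ) := {p | (s/2 ≤ 0*p.1 + 1*p.2 ∧ 0*p.1 + 1*p.2 ≤ s) ∧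
      (s ≤ s*p.1 + 1*p.2 ∧ s*p.1 + 1*p.2 ≤ 2*s)} with hR2def
  set R3 : Set (ℝ × ℝ) := {p | (0 ≤ s*p.1 + 1*p.2 ∧ s*p.1 + 1*p.2 ≤ s) ∧
      (-s ≤ s*p.1 + (-1)*p.2 ∧ s*p.1 + (-1)*p.2 ≤ 0)} with hR3def
  -- rhombi pieces covering SS
  set Q1 : Set (ℝ × ℝ) := {p | (0 ≤ 1*p.1 + 0*p.2 ∧ 1*p.1 + 0*p.2 ≤ 1/2) ∧
      (1 ≤ (-1)*p.1 + s*p.2 ∧ (-1)*p.1 + s*p.2 ≤ 2)} with hQ1def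
  set Q2 : Set (ℝ × ℝ) := {p | (1/2 ≤ 1*p.1 + 0*p.2 ∧ 1*p.1 + 0*p.2 ≤ 1) ∧
      (2 ≤ 1*p.1 + s*p.2 ∧ 1*p.1 + s*p.2 ≤ 3)} with hQ2def
  set Q3 : Set (ℝ × ℝ) := {p | (1 ≤ 1*p.1 + s*p.2 ∧ 1*p.1 + s*p.2 ≤ 2) ∧
      (0 ≤ (-1)*p.1 + s*p.2 ∧ (-1)*p.1 + s*p.2 ≤ 1)} with hQ3def
  -- measurability of the strips
  have measG0 : MeasurableSet (Γ 0) := by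
    rw [h1]; exact meas_strip2 _ ((measurable_fst.const_mul s).add measurable_snd) _ _
  have measG1 : MeasurableSet (Γ 1) := by
    rw [h2]; exact meas_strip2 _ (measurable_fst.add (measurable_snd.const_mul s)) _ _
  have measG2 : MeasurableSet (Γ 2) := by
    rw [h3]; exact meas_strip2 _ measurable_snd _ _
  have measG3 : MeasurableSet (Γ 3) := by
    rw [h4]; exact meas_strip2 _ (measurable_fst.neg.add (measurable_snd.const_mul s)) _ _
  have measG4 : MeasurableSet (Γ 4) := by
    rw [h5]; exact meas_strip2 _ ((measurable_fst.const_mul (-s)).add measurable_snd) _ _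
  have measG5 : MeasurableSet (Γ 5) := by
    rw [h6]; exact meas_strip2 _ measurable_fst _ _
  have measG : ∀ j, MeasurableSet (Γ j) := by
    intro j
    fin_cases j
    exacts [measG0, measG1, measG2, measG3, measG4, measG5]
  have measW : MeasurableSet W := ((measG 0).inter (measG 2)).inter (measG 4)
  have measSS : MeasurableSet SS := ((measG 1).inter (measG 3)).inter (measG 5)
  have measU : MeasurableSet U :=
    (((measG 1).inter (measG 3)).union ((measG 3).inter (measG 5))).union
      ((measG 1).inter (measG 5))
  -- pointwise geometry: each pair of narrow strips lies inside W
  have hRaW : Γ 1 ∩ Γ 3 ⊆ W := by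
    rintro p ⟨hp1, hp3⟩
    rw [h2] at hp1; rw [h4] at hp3
    obtain ⟨a1, a2⟩ := hp1; obtain ⟨b1, b2⟩ := hp3
    rw [hWdef, h1, h3, h5]
    refine ⟨⟨⟨?_, ?_⟩, ?_, ?_⟩, ?_, ?_⟩ <;>
      nlinarith [s3, s3p, mul_nonneg s3p.le (by linarith : (0:ℝ) ≤ p.1 + s*p.2 - 1),
        mul_nonneg s3p.le (by linarith : (0:ℝ) ≤ 3 - (p.1 + s*p.2)),
        mul_nonneg s3p.le (by linarith : (0:ℝ) ≤ -p.1 + s*p.2),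
        mul_nonneg s3p.le (by linarith : (0:ℝ) ≤ 2 - (-p.1 + s*p.2))]
  have hRbW : Γ 3 ∩ Γ 5 ⊆ W := by
    rintro p ⟨hp3, hp5⟩
    rw [h4] at hp3; rw [h6] at hp5
    obtain ⟨a1, a2⟩ := hp3; obtain ⟨b1, b2⟩ := hp5
    rw [hWdef, h1, h3, h5]
    refine ⟨⟨⟨?_, ?_⟩, ?_, ?_⟩, ?_, ?_⟩ <;>
      nlinarith [s3, s3p, mul_nonneg s3p.le (by linarith : (0:ℝ) ≤ -p.1 + s*p.2),
        mul_nonneg s3p.le (by linarith : (0:ℝ) ≤ 2 - (-p.1 + s*p.2)),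
        mul_nonneg s3p.le (by linarith : (0:ℝ) ≤ p.1),
        mul_nonneg s3p.le (by linarith : (0:ℝ) ≤ 1 - p.1)]
  have hRcW : Γ 1 ∩ Γ 5 ⊆ W := by
    rintro p ⟨hp1, hp5⟩
    rw [h2] at hp1; rw [h6] at hp5
    obtain ⟨a1, a2⟩ := hp1; obtain ⟨b1, b2⟩ := hp5
    rw [hWdef, h1, h3, h5]
    refine ⟨⟨⟨?_, ?_⟩, ?_, ?_⟩, ?_, ?_⟩ <;>
      nlinarith [s3, s3p, mul_nonneg s3p.le (by linarith : (0:ℝ) ≤ p.1 + s*p.2 - 1),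
        mul_nonneg s3p.le (by linarith : (0:ℝ) ≤ 3 - (p.1 + s*p.2)),
        mul_nonneg s3p.le (by linarith : (0:ℝ) ≤ p.1),
        mul_nonneg s3p.le (by linarith : (0:ℝ) ≤ 1 - p.1)]
  have hUW : U ⊆ W := by
    rintro p ((h | h) | h)
    exacts [hRaW h, hRbW h, hRcW h]
  have hSU : SS ⊆ U := by rintro p ⟨⟨m1, m3⟩, m5⟩; exact Or.inl (Or.inl ⟨m1, m3⟩)
  -- every point of W is in at least one narrow strip
  have hWnarrow : ∀ p ∈ W, p ∈ Γ 1 ∨ p ∈ Γ 3 ∨ p ∈ Γ 5 := by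
    intro p hp
    rw [hWdef, h1, h3, h5] at hp
    obtain ⟨⟨⟨a1, a2⟩, b1, b2⟩, c1, c2⟩ := hp
    rw [h2, h4, h6]
    simp only [Set.mem_setOf_eq]
    rcases le_total p.1 0 with hx | hx
    · rcases le_total p.2 (s/2) with hy | hy
      · right; left
        refine ⟨?_, ?_⟩ <;>
          nlinarith [s3, s3p, mul_nonneg s3p.le (by linarith : (0:ℝ) ≤ s*p.1 + p.2),
            mul_nonneg s3p.le (by linarith : (0:ℝ) ≤ 2*s - (s*p.1 + p.2)),
            mul_nonneg s3p.le (by linarith : (0:ℝ) ≤ s - (-s*p.1 + p.2)),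
            mul_nonneg s3p.le (by linarith : (0:ℝ) ≤ -s*p.1 + p.2 + s),
            mul_nonneg s3p.le (by linarith : (0:ℝ) ≤ -p.1),
            mul_nonneg s3p.le (by linarith : (0:ℝ) ≤ s/2 - p.2),
            mul_nonneg s3p.le b1, mul_nonneg s3p.le (by linarith : (0:ℝ) ≤ s - p.2)]
      · left
        refine ⟨?_, ?_⟩ <;>
          nlinarith [s3, s3p, mul_nonneg s3p.le (by linarith : (0:ℝ) ≤ s*p.1 + p.2),
            mul_nonneg s3p.le (by linarith : (0:ℝ) ≤ 2*s - (s*p.1 + p.2)),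
            mul_nonneg s3p.le (by linarith : (0:ℝ) ≤ s - (-s*p.1 + p.2)),
            mul_nonneg s3p.le (by linarith : (0:ℝ) ≤ -s*p.1 + p.2 + s),
            mul_nonneg s3p.le (by linarith : (0:ℝ) ≤ -p.1),
            mul_nonneg s3p.le (by linarith : (0:ℝ) ≤ p.2 - s/2),
            mul_nonneg s3p.le b1, mul_nonneg s3p.le (by linarith : (0:ℝ) ≤ s - p.2)]
    · rcases le_total p.1 1 with hx1 | hx1
      · right; right; exact ⟨hx, hx1⟩
      · rcases le_total p.2 (s/2) with hy | hy
        · left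
          refine ⟨?_, ?_⟩ <;>
            nlinarith [s3, s3p, mul_nonneg s3p.le (by linarith : (0:ℝ) ≤ s*p.1 + p.2),
              mul_nonneg s3p.le (by linarith : (0:ℝ) ≤ 2*s - (s*p.1 + p.2)),
              mul_nonneg s3p.le (by linarith : (0:ℝ) ≤ s - (-s*p.1 + p.2)),
              mul_nonneg s3p.le (by linarith : (0:ℝ) ≤ -s*p.1 + p.2 + s),
              mul_nonneg s3p.le (by linarith : (0:ℝ) ≤ p.1 - 1),
              mul_nonneg s3p.le (by linarith : (0:ℝ) ≤ s/2 - p.2),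
              mul_nonneg s3p.le b1, mul_nonneg s3p.le (by linarith : (0:ℝ) ≤ s - p.2)]
        · right; left
          refine ⟨?_, ?_⟩ <;>
            nlinarith [s3, s3p, mul_nonneg s3p.le (by linarith : (0:ℝ) ≤ s*p.1 + p.2),
              mul_nonneg s3p.le (by linarith : (0:ℝ) ≤ 2*s - (s*p.1 + p.2)),
              mul_nonneg s3p.le (by linarith : (0:ℝ) ≤ s - (-s*p.1 + p.2)),
              mul_nonneg s3p.le (by linarith : (0:ℝ) ≤ -s*p.1 + p.2 + s),
              mul_nonneg s3p.le (by linarith : (0:ℝ) ≤ p.1 - 1),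
              mul_nonneg s3p.le (by linarith : (0:ℝ) ≤ p.2 - s/2),
              mul_nonneg s3p.le b1, mul_nonneg s3p.le (by linarith : (0:ℝ) ≤ s - p.2)]
  -- card bridge
  have hcard : ∀ p : ℝ × ℝ, Nat.card {j : Fin 6 // p ∈ Γ j}
      = (Finset.univ.filter fun j => p ∈ Γ j).card := by
    intro p
    rw [Nat.card_eq_fintype_card, Fintype.card_subtype]
  -- outside W: at most 3 strips
  have hout : ∀ p : ℝ × ℝ, p ∉ W → (Finset.univ.filter fun j => p ∈ Γ j).card ≤ 3 := by
    intro p hp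
    have hw : p ∉ Γ 0 ∨ p ∉ Γ 2 ∨ p ∉ Γ 4 := by
      by_contra hc
      push_neg at hc
      exact hp ⟨⟨hc.1, hc.2.1⟩, hc.2.2⟩
    have hn : (p ∉ Γ 1 ∧ p ∉ Γ 3) ∨ (p ∉ Γ 1 ∧ p ∉ Γ 5) ∨ (p ∉ Γ 3 ∧ p ∉ Γ 5) := by
      by_cases n1 : p ∈ Γ 1
      · by_cases n3 : p ∈ Γ 3
        · exact absurd (hRaW ⟨n1, n3⟩) hp
        · by_cases n5 : p ∈ Γ 5
          · exact absurd (hRcW ⟨n1, n5⟩) hp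
          · right; right; exact ⟨n3, n5⟩
      · by_cases n3 : p ∈ Γ 3
        · by_cases n5 : p ∈ Γ 5
          · exact absurd (hRbW ⟨n3, n5⟩) hp
          · right; left; exact ⟨n1, n5⟩
        · left; exact ⟨n1, n3⟩
    rcases hw with hw | hw | hw <;> rcases hn with ⟨ha', hb'⟩ | ⟨ha', hb'⟩ | ⟨ha', hb'⟩
    · exact card_le_of_not3 _ (by decide) (by decide) (by decide) hw ha' hb'
    · exact card_le_of_not3 _ (by decide) (by decide) (by decide) hw ha' hb'
    · exact card_le_of_not3 _ (by decide) (by decide) (by decide) hw ha' hb'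
    · exact card_le_of_not3 _ (by decide) (by decide) (by decide) hw ha' hb'
    · exact card_le_of_not3 _ (by decide) (by decide) (by decide) hw ha' hb'
    · exact card_le_of_not3 _ (by decide) (by decide) (by decide) hw ha' hb'
    · exact card_le_of_not3 _ (by decide) (by decide) (by decide) hw ha' hb'
    · exact card_le_of_not3 _ (by decide) (by decide) (by decide) hw ha' hb'
    · exact card_le_of_not3 _ (by decide) (by decide) (by decide) hw ha' hb'
  -- the exact-count sets
  have hE6 : {p : ℝ × ℝ | Nat.card {j : Fin 6 // p ∈ Γ j} = 6} = SS := by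
    ext p
    simp only [Set.mem_setOf_eq]
    rw [hcard p]
    constructor
    · intro h
      have huniv : (Finset.univ.filter fun j => p ∈ Γ j) = Finset.univ :=
        Finset.eq_univ_of_card _ (by rw [h]; decide)
      have hall : ∀ j : Fin 6, p ∈ Γ j := by
        intro j
        have := huniv ▸ Finset.mem_univ j
        exact (Finset.mem_filter.mp this).2
      exact ⟨⟨hall 1, hall 3⟩, hall 5⟩
    · rintro ⟨⟨m1, m3⟩, m5⟩
      obtain ⟨⟨m0, m2⟩, m4⟩ := hRaW ⟨m1, m3⟩
      have : (Finset.univ.filter fun j => p ∈ Γ j) = Finset.univ := by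
        apply Finset.eq_univ_of_forall
        intro j
        rw [Finset.mem_filter]
        refine ⟨Finset.mem_univ _, ?_⟩
        fin_cases j <;> assumption
      rw [this]; decide
  have hE5 : {p : ℝ × ℝ | Nat.card {j : Fin 6 // p ∈ Γ j} = 5} = U \ SS := by
    ext p
    simp only [Set.mem_setOf_eq, Set.mem_diff]
    rw [hcard p]
    constructor
    · intro h
      have hpW : p ∈ W := by
        by_contra hc
        have := hout p hc
        omega
      obtain ⟨⟨m0, m2⟩, m4⟩ := hpW
      by_cases n1 : p ∈ Γ 1 <;> by_cases n3 : p ∈ Γ 3 <;> by_cases n5 : p ∈ Γ 5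
      · exfalso
        have : (Finset.univ.filter fun j => p ∈ Γ j) = Finset.univ := by
          apply Finset.eq_univ_of_forall
          intro j
          rw [Finset.mem_filter]
          exact ⟨Finset.mem_univ _, by fin_cases j <;> assumption⟩
        rw [this] at h
        exact absurd h (by decide)
      · refine ⟨Or.inl (Or.inl ⟨n1, n3⟩), ?_⟩
        rintro ⟨⟨_, _⟩, u5⟩; exact n5 u5
      · refine ⟨Or.inr ⟨n1, n5⟩, ?_⟩
        rintro ⟨⟨_, u3⟩, _⟩; exact n3 u3
      · exfalso
        have : (Finset.univ.filter fun j => p ∈ Γ j) = ({0, 1, 2, 4} : Finset (Fin 6)) := by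
          ext j; fin_cases j <;> simp [m0, m2, m4, n1, n3, n5]
        rw [this] at h
        exact absurd h (by decide)
      · refine ⟨Or.inl (Or.inr ⟨n3, n5⟩), ?_⟩
        rintro ⟨⟨u1, _⟩, _⟩; exact n1 u1
      · exfalso
        have : (Finset.univ.filter fun j => p ∈ Γ j) = ({0, 2, 3, 4} : Finset (Fin 6)) := by
          ext j; fin_cases j <;> simp [m0, m2, m4, n1, n3, n5]
        rw [this] at h
        exact absurd h (by decide)
      · exfalso
        have : (Finset.univ.filter fun j => p ∈ Γ j) = ({0, 2, 4, 5} : Finset (Fin 6)) := by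
          ext j; fin_cases j <;> simp [m0, m2, m4, n1, n3, n5]
        rw [this] at h
        exact absurd h (by decide)
      · exfalso
        have : (Finset.univ.filter fun j => p ∈ Γ j) = ({0, 2, 4} : Finset (Fin 6)) := by
          ext j; fin_cases j <;> simp [m0, m2, m4, n1, n3, n5]
        rw [this] at h
        exact absurd h (by decide)
    · rintro ⟨hU, hnS⟩
      have hpW : p ∈ W := hUW hU
      obtain ⟨⟨m0, m2⟩, m4⟩ := hpW
      rcases hU with (⟨n1, n3⟩ | ⟨n3, n5⟩) | ⟨n1, n5⟩
      · have n5 : p ∉ Γ 5 := fun n5 => hnS (by exact ⟨⟨n1, n3⟩, n5⟩)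
        have : (Finset.univ.filter fun j => p ∈ Γ j) = ({0, 1, 2, 3, 4} : Finset (Fin 6)) := by
          ext j; fin_cases j <;> simp [m0, m2, m4, n1, n3, n5]
        rw [this]; decide
      · have n1 : p ∉ Γ 1 := fun n1 => hnS (by exact ⟨⟨n1, n3⟩, n5⟩)
        have : (Finset.univ.filter fun j => p ∈ Γ j) = ({0, 2, 3, 4, 5} : Finset (Fin 6)) := by
          ext j; fin_cases j <;> simp [m0, m2, m4, n1, n3, n5]
        rw [this]; decide
      · have n3 : p ∉ Γ 3 := fun n3 => hnS (by exact ⟨⟨n1, n3⟩, n5⟩)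
        have : (Finset.univ.filter fun j => p ∈ Γ j) = ({0, 1, 2, 4, 5} : Finset (Fin 6)) := by
          ext j; fin_cases j <;> simp [m0, m2, m4, n1, n3, n5]
        rw [this]; decide
  have hE4 : {p : ℝ × ℝ | Nat.card {j : Fin 6 // p ∈ Γ j} = 4} = W \ U := by
    ext p
    simp only [Set.mem_setOf_eq, Set.mem_diff]
    rw [hcard p]
    constructor
    · intro h
      have hpW : p ∈ W := by
        by_contra hc
        have := hout p hc
        omega
      refine ⟨hpW, ?_⟩
      obtain ⟨⟨m0, m2⟩, m4⟩ := hpW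
      rintro ((⟨n1, n3⟩ | ⟨n3, n5⟩) | ⟨n1, n5⟩)
      · by_cases n5 : p ∈ Γ 5
        · have : (Finset.univ.filter fun j => p ∈ Γ j) = Finset.univ :=
            Finset.eq_univ_of_forall fun j => Finset.mem_filter.mpr
              ⟨Finset.mem_univ _, by fin_cases j <;> assumption⟩
          rw [this] at h; exact absurd h (by decide)
        · have : (Finset.univ.filter fun j => p ∈ Γ j)
              = ({0, 1, 2, 3, 4} : Finset (Fin 6)) := by
            ext j; fin_cases j <;> simp [m0, m2, m4, n1, n3, n5]
          rw [this] at h; exact absurd h (by decide)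
      · by_cases n1 : p ∈ Γ 1
        · by_cases n5' : p ∈ Γ 5
          · have : (Finset.univ.filter fun j => p ∈ Γ j) = Finset.univ :=
              Finset.eq_univ_of_forall fun j => Finset.mem_filter.mpr
                ⟨Finset.mem_univ _, by fin_cases j <;> assumption⟩
            rw [this] at h; exact absurd h (by decide)
          · exact n5' n5
        · have : (Finset.univ.filter fun j => p ∈ Γ j)
              = ({0, 2, 3, 4, 5} : Finset (Fin 6)) := by
            ext j; fin_cases j <;> simp [m0, m2, m4, n1, n3, n5]
          rw [this] at h; exact absurd h (by decide)
      · by_cases n3 : p ∈ Γ 3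
        · have : (Finset.univ.filter fun j => p ∈ Γ j) = Finset.univ :=
            Finset.eq_univ_of_forall fun j => Finset.mem_filter.mpr
              ⟨Finset.mem_univ _, by fin_cases j <;> assumption⟩
          rw [this] at h; exact absurd h (by decide)
        · have : (Finset.univ.filter fun j => p ∈ Γ j)
              = ({0, 1, 2, 4, 5} : Finset (Fin 6)) := by
            ext j; fin_cases j <;> simp [m0, m2, m4, n1, n3, n5]
          rw [this] at h; exact absurd h (by decide)
    · rintro ⟨hpW, hnU⟩
      obtain ⟨⟨m0, m2⟩, m4⟩ := hpW
      have n12 : ¬(p ∈ Γ 1 ∧ p ∈ Γ 3) := fun ⟨u, v⟩ => hnU (Or.inl (Or.inl ⟨u, v⟩))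
      have n35 : ¬(p ∈ Γ 3 ∧ p ∈ Γ 5) := fun ⟨u, v⟩ => hnU (Or.inl (Or.inr ⟨u, v⟩))
      have n15 : ¬(p ∈ Γ 1 ∧ p ∈ Γ 5) := fun ⟨u, v⟩ => hnU (Or.inr ⟨u, v⟩)
      rcases hWnarrow p ⟨⟨m0, m2⟩, m4⟩ with n1 | n3 | n5
      · have n3 : p ∉ Γ 3 := fun n3 => n12 ⟨n1, n3⟩
        have n5 : p ∉ Γ 5 := fun n5 => n15 ⟨n1, n5⟩
        have : (Finset.univ.filter fun j => p ∈ Γ j) = ({0, 1, 2, 4} : Finset (Fin 6)) := by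
          ext j; fin_cases j <;> simp [m0, m2, m4, n1, n3, n5]
        rw [this]; decide
      · have n1 : p ∉ Γ 1 := fun n1 => n12 ⟨n1, n3⟩
        have n5 : p ∉ Γ 5 := fun n5 => n35 ⟨n3, n5⟩
        have : (Finset.univ.filter fun j => p ∈ Γ j) = ({0, 2, 3, 4} : Finset (Fin 6)) := by
          ext j; fin_cases j <;> simp [m0, m2, m4, n1, n3, n5]
        rw [this]; decide
      · have n1 : p ∉ Γ 1 := fun n1 => n15 ⟨n1, n5⟩
        have n3 : p ∉ Γ 3 := fun n3 => n35 ⟨n3, n5⟩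
        have : (Finset.univ.filter fun j => p ∈ Γ j) = ({0, 2, 4, 5} : Finset (Fin 6)) := by
          ext j; fin_cases j <;> simp [m0, m2, m4, n1, n3, n5]
        rw [this]; decide
  -- volumes of the elementary parallelograms
  have habs : ∀ t : ℝ, 0 < t → |t⁻¹| = t⁻¹ := fun t ht => abs_of_pos (by positivity)
  have hvRa : volume (Γ 1 ∩ Γ 3) = ENNReal.ofReal (2*s/3) := by
    have hset : Γ 1 ∩ Γ 3 = {p : ℝ × ℝ | (1 ≤ 1*p.1 + s*p.2 ∧ 1*p.1 + s*p.2 ≤ 3) ∧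
        (0 ≤ (-1)*p.1 + s*p.2 ∧ (-1)*p.1 + s*p.2 ≤ 2)} := by
      rw [h2, h4]; ext p
      simp only [Set.mem_inter_iff, Set.mem_setOf_eq, one_mul, neg_one_mul]
    rw [hset, vol_par 1 s (-1) s 1 3 0 2 (by intro hc; linarith [s3p]) (by norm_num)]
    congr 1
    rw [show (1*s - s*(-1) : ℝ) = 2*s by ring, habs _ (by linarith [s3p])]
    field_simp [ne_of_gt s3p]
    all_goals nlinarith [s3]
  have hvRb : volume (Γ 3 ∩ Γ 5) = ENNReal.ofReal (2*s/3) := by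
    have hset : Γ 3 ∩ Γ 5 = {p : ℝ × ℝ | (0 ≤ (-1)*p.1 + s*p.2 ∧ (-1)*p.1 + s*p.2 ≤ 2) ∧
        (0 ≤ 1*p.1 + 0*p.2 ∧ 1*p.1 + 0*p.2 ≤ 1)} := by
      rw [h4, h6]; ext p
      simp only [Set.mem_inter_iff, Set.mem_setOf_eq, one_mul, neg_one_mul, zero_mul, add_zero]
    rw [hset, vol_par (-1) s 1 0 0 2 0 1 (by intro hc; linarith [s3p]) (by norm_num)]
    congr 1
    rw [show ((-1)*0 - s*1 : ℝ) = -s by ring, abs_inv, abs_neg, abs_of_pos s3p]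
    field_simp [ne_of_gt s3p]
    all_goals nlinarith [s3]
  have hvRc : volume (Γ 1 ∩ Γ 5) = ENNReal.ofReal (2*s/3) := by
    have hset : Γ 1 ∩ Γ 5 = {p : ℝ × ℝ | (1 ≤ 1*p.1 + s*p.2 ∧ 1*p.1 + s*p.2 ≤ 3) ∧
        (0 ≤ 1*p.1 + 0*p.2 ∧ 1*p.1 + 0*p.2 ≤ 1)} := by
      rw [h2, h6]; ext p
      simp only [Set.mem_inter_iff, Set.mem_setOf_eq, one_mul, zero_mul, add_zero]
    rw [hset, vol_par 1 s 1 0 1 3 0 1 (by intro hc; linarith [s3p]) (by norm_num)]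
    congr 1
    rw [show (1*0 - s*1 : ℝ) = -s by ring, abs_inv, abs_neg, abs_of_pos s3p]
    field_simp [ne_of_gt s3p]
    all_goals nlinarith [s3]
  have hvR1 : volume R1 = ENNReal.ofReal (s/2) := by
    rw [hR1def, vol_par 0 1 s (-1) 0 (s/2) 0 s (by intro hc; linarith [s3p]) (by linarith [s3p])]
    congr 1
    rw [show (0*(-1) - 1*s : ℝ) = -s by ring, abs_inv, abs_neg, abs_of_pos s3p]
    field_simp [ne_of_gt s3p]
    all_goals nlinarith [s3]
  have hvR2 : volume R2 = ENNReal.ofReal (s/2) := by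
    rw [hR2def, vol_par 0 1 s 1 (s/2) s s (2*s) (by intro hc; linarith [s3p]) (by linarith [s3p])]
    congr 1
    rw [show (0*1 - 1*s : ℝ) = -s by ring, abs_inv, abs_neg, abs_of_pos s3p]
    field_simp [ne_of_gt s3p]
    all_goals nlinarith [s3]
  have hvR3 : volume R3 = ENNReal.ofReal (s/2) := by
    rw [hR3def, vol_par s 1 s (-1) 0 s (-s) 0 (by intro hc; linarith [s3p]) s3p.le]
    congr 1
    rw [show (s*(-1) - 1*s : ℝ) = -(2*s) by ring, abs_inv, abs_neg, abs_of_pos (by linarith [s3p])]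
    field_simp [ne_of_gt s3p]
    all_goals nlinarith [s3]
  have hvQ1 : volume Q1 = ENNReal.ofReal (s/6) := by
    rw [hQ1def, vol_par 1 0 (-1) s 0 (1/2) 1 2 (by intro hc; linarith [s3p]) (by norm_num)]
    congr 1
    rw [show (1*s - 0*(-1) : ℝ) = s by ring, habs _ s3p]
    field_simp [ne_of_gt s3p]
    all_goals nlinarith [s3]
  have hvQ2 : volume Q2 = ENNReal.ofReal (s/6) := by
    rw [hQ2def, vol_par 1 0 1 s (1/2) 1 2 3 (by intro hc; linarith [s3p]) (by norm_num)]
    congr 1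
    rw [show (1*s - 0*1 : ℝ) = s by ring, habs _ s3p]
    field_simp [ne_of_gt s3p]
    all_goals nlinarith [s3]
  have hvQ3 : volume Q3 = ENNReal.ofReal (s/6) := by
    rw [hQ3def, vol_par 1 s (-1) s 1 2 0 1 (by intro hc; linarith [s3p]) (by norm_num)]
    congr 1
    rw [show (1*s - s*(-1) : ℝ) = 2*s by ring, habs _ (by linarith [s3p])]
    field_simp [ne_of_gt s3p]
    all_goals nlinarith [s3]
  -- decomposition of W
  have hWeq : W = R1 ∪ R2 ∪ R3 := by
    rw [hWdef, hR1def, hR2def, hR3def, h1, h3, h5]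
    ext p
    simp only [Set.mem_inter_iff, Set.mem_union, Set.mem_setOf_eq]
    constructor
    · rintro ⟨⟨⟨a1, a2⟩, b1, b2⟩, c1, c2⟩
      rcases le_total (s*p.1 - p.2) 0 with ht | ht
      · rcases le_total (s*p.1 + p.2) s with hs' | hs'
        · right; constructor <;> constructor <;> linarith
        · left; right; constructor <;> constructor <;> linarith
      · rcases le_total p.2 (s/2) with hy | hy
        · left; left; constructor <;> constructor <;> linarith
        · left; right; constructor <;> constructor <;> linarith
    · rintro ((⟨⟨a1, a2⟩, b1, b2⟩ | ⟨⟨a1, a2⟩, b1, b2⟩) | ⟨⟨a1, a2⟩, b1, b2⟩) <;>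
        refine ⟨⟨⟨by linarith, by linarith⟩, by linarith, by linarith⟩,
          by linarith, by linarith⟩
  have hSeq : SS = Q1 ∪ Q2 ∪ Q3 := by
    rw [hSSdef, hQ1def, hQ2def, hQ3def, h2, h4, h6]
    ext p
    simp only [Set.mem_inter_iff, Set.mem_union, Set.mem_setOf_eq]
    constructor
    · rintro ⟨⟨⟨a1, a2⟩, b1, b2⟩, c1, c2⟩
      rcases le_total 1 (-p.1 + s*p.2) with hb | hb
      · rcases le_total p.1 (1/2) with hx | hx
        · left; left; constructor <;> constructor <;> linarith
        · left; right; constructor <;> constructor <;> linarith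
      · rcases le_total (p.1 + s*p.2) 2 with hs' | hs'
        · right; constructor <;> constructor <;> linarith
        · left; right; constructor <;> constructor <;> linarith
    · rintro ((⟨⟨a1, a2⟩, b1, b2⟩ | ⟨⟨a1, a2⟩, b1, b2⟩) | ⟨⟨a1, a2⟩, b1, b2⟩) <;>
        refine ⟨⟨⟨by linarith, by linarith⟩, by linarith, by linarith⟩,
          by linarith, by linarith⟩
  -- a.e. disjointness of the pieces
  have measR1 : MeasurableSet R1 := by
    rw [hR1def]
    exact (meas_strip2 (fun p => 0*p.1 + 1*p.2)
        ((measurable_fst.const_mul 0).add (measurable_snd.const_mul 1)) 0 (s/2)).inter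
      (meas_strip2 (fun p => s*p.1 + (-1)*p.2)
        ((measurable_fst.const_mul s).add (measurable_snd.const_mul (-1))) 0 s)
  have measR2 : MeasurableSet R2 := by
    rw [hR2def]
    exact (meas_strip2 (fun p => 0*p.1 + 1*p.2)
        ((measurable_fst.const_mul 0).add (measurable_snd.const_mul 1)) (s/2) s).inter
      (meas_strip2 (fun p => s*p.1 + 1*p.2)
        ((measurable_fst.const_mul s).add (measurable_snd.const_mul 1)) s (2*s))
  have measR3 : MeasurableSet R3 := by
    rw [hR3def]
    exact (meas_strip2 (fun p => s*p.1 + 1*p.2)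
        ((measurable_fst.const_mul s).add (measurable_snd.const_mul 1)) 0 s).inter
      (meas_strip2 (fun p => s*p.1 + (-1)*p.2)
        ((measurable_fst.const_mul s).add (measurable_snd.const_mul (-1))) (-s) 0)
  have measQ1 : MeasurableSet Q1 := by
    rw [hQ1def]
    exact (meas_strip2 (fun p => 1*p.1 + 0*p.2)
        ((measurable_fst.const_mul 1).add (measurable_snd.const_mul 0)) 0 (1/2)).inter
      (meas_strip2 (fun p => (-1)*p.1 + s*p.2)
        ((measurable_fst.const_mul (-1)).add (measurable_snd.const_mul s)) 1 2)
  have measQ2 : MeasurableSet Q2 := by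
    rw [hQ2def]
    exact (meas_strip2 (fun p => 1*p.1 + 0*p.2)
        ((measurable_fst.const_mul 1).add (measurable_snd.const_mul 0)) (1/2) 1).inter
      (meas_strip2 (fun p => 1*p.1 + s*p.2)
        ((measurable_fst.const_mul 1).add (measurable_snd.const_mul s)) 2 3)
  have measQ3 : MeasurableSet Q3 := by
    rw [hQ3def]
    exact (meas_strip2 (fun p => 1*p.1 + s*p.2)
        ((measurable_fst.const_mul 1).add (measurable_snd.const_mul s)) 1 2).inter
      (meas_strip2 (fun p => (-1)*p.1 + s*p.2)
        ((measurable_fst.const_mul (-1)).add (measurable_snd.const_mul s)) 0 1)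
  have dR12 : volume (R1 ∩ R2) = 0 := by
    apply measure_mono_null (t := {p : ℝ × ℝ | 0*p.1 + 1*p.2 = s/2})
    · rintro p ⟨hp1, hp2⟩
      rw [hR1def] at hp1; rw [hR2def] at hp2
      simp only [Set.mem_setOf_eq] at hp1 hp2 ⊢
      linarith [hp1.1.2, hp2.1.1]
    · exact vol_line 0 1 (s/2) (by norm_num)
  have dR13 : volume (R1 ∩ R3) = 0 := by
    apply measure_mono_null (t := {p : ℝ × ℝ | s*p.1 + (-1)*p.2 = 0})
    · rintro p ⟨hp1, hp3⟩
      rw [hR1def] at hp1; rw [hR3def] at hp3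
      simp only [Set.mem_setOf_eq] at hp1 hp3 ⊢
      linarith [hp1.2.1, hp3.2.2]
    · exact vol_line s (-1) 0 (by intro hc; exact absurd hc.2 (by norm_num))
  have dR23 : volume (R2 ∩ R3) = 0 := by
    apply measure_mono_null (t := {p : ℝ × ℝ | s*p.1 + 1*p.2 = s})
    · rintro p ⟨hp2, hp3⟩
      rw [hR2def] at hp2; rw [hR3def] at hp3
      simp only [Set.mem_setOf_eq] at hp2 hp3 ⊢
      linarith [hp2.2.1, hp3.1.2]
    · exact vol_line s 1 s (by intro hc; exact absurd hc.2 (by norm_num))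
  have dQ12 : volume (Q1 ∩ Q2) = 0 := by
    apply measure_mono_null (t := {p : ℝ × ℝ | 1*p.1 + 0*p.2 = 1/2})
    · rintro p ⟨hp1, hp2⟩
      rw [hQ1def] at hp1; rw [hQ2def] at hp2
      simp only [Set.mem_setOf_eq] at hp1 hp2 ⊢
      linarith [hp1.1.2, hp2.1.1]
    · exact vol_line 1 0 (1/2) (by norm_num)
  have dQ13 : volume (Q1 ∩ Q3) = 0 := by
    apply measure_mono_null (t := {p : ℝ × ℝ | (-1)*p.1 + s*p.2 = 1})
    · rintro p ⟨hp1, hp3⟩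
      rw [hQ1def] at hp1; rw [hQ3def] at hp3
      simp only [Set.mem_setOf_eq] at hp1 hp3 ⊢
      linarith [hp1.2.1, hp3.2.2]
    · exact vol_line (-1) s 1 (by intro hc; exact absurd hc.1 (by norm_num))
  have dQ23 : volume (Q2 ∩ Q3) = 0 := by
    apply measure_mono_null (t := {p : ℝ × ℝ | 1*p.1 + s*p.2 = 2})
    · rintro p ⟨hp2, hp3⟩
      rw [hQ2def] at hp2; rw [hQ3def] at hp3
      simp only [Set.mem_setOf_eq] at hp2 hp3 ⊢
      linarith [hp2.2.1, hp3.1.2]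
    · exact vol_line 1 s 2 (by intro hc; exact absurd hc.1 (by norm_num))
  -- volume of W
  have hvolW : volume W = ENNReal.ofReal (3*s/2) := by
    rw [hWeq]
    rw [measure_union₀ measR3.nullMeasurableSet
        (MeasureTheory.AEDisjoint.union_left dR13 dR23),
      measure_union₀ measR2.nullMeasurableSet dR12, hvR1, hvR2, hvR3,
      ← ENNReal.ofReal_add (by linarith [s3p]) (by linarith [s3p]),
      ← ENNReal.ofReal_add (by linarith [s3p]) (by linarith [s3p])]
    congr 1
    ring
  have hvolS : volume SS = ENNReal.ofReal (s/2) := by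
    rw [hSeq]
    rw [measure_union₀ measQ3.nullMeasurableSet
        (MeasureTheory.AEDisjoint.union_left dQ13 dQ23),
      measure_union₀ measQ2.nullMeasurableSet dQ12, hvQ1, hvQ2, hvQ3,
      ← ENNReal.ofReal_add (by linarith [s3p]) (by linarith [s3p]),
      ← ENNReal.ofReal_add (by linarith [s3p]) (by linarith [s3p])]
    congr 1
    ring
  have hSfin : volume SS ≠ ⊤ := by rw [hvolS]; exact ENNReal.ofReal_ne_top
  -- volume of each rhombus minus SS
  have hSsubRa : SS ⊆ Γ 1 ∩ Γ 3 := fun p hp => hp.1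
  have hSsubRb : SS ⊆ Γ 3 ∩ Γ 5 := fun p hp => ⟨hp.1.2, hp.2⟩
  have hSsubRc : SS ⊆ Γ 1 ∩ Γ 5 := fun p hp => ⟨hp.1.1, hp.2⟩
  have hvRaS : volume ((Γ 1 ∩ Γ 3) \ SS) = ENNReal.ofReal (s/6) := by
    rw [measure_diff hSsubRa measSS.nullMeasurableSet hSfin, hvRa, hvolS,
      ← ENNReal.ofReal_sub _ (by linarith [s3p])]
    congr 1
    ring
  have hvRbS : volume ((Γ 3 ∩ Γ 5) \ SS) = ENNReal.ofReal (s/6) := by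
    rw [measure_diff hSsubRb measSS.nullMeasurableSet hSfin, hvRb, hvolS,
      ← ENNReal.ofReal_sub _ (by linarith [s3p])]
    congr 1
    ring
  have hvRcS : volume ((Γ 1 ∩ Γ 5) \ SS) = ENNReal.ofReal (s/6) := by
    rw [measure_diff hSsubRc measSS.nullMeasurableSet hSfin, hvRc, hvolS,
      ← ENNReal.ofReal_sub _ (by linarith [s3p])]
    congr 1
    ring
  -- U \ SS is the genuinely disjoint union of the three pieces
  have hUSeq : U \ SS = (((Γ 1 ∩ Γ 3) \ SS) ∪ ((Γ 3 ∩ Γ 5) \ SS)) ∪ ((Γ 1 ∩ Γ 5) \ SS) := by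
    rw [hUdef, Set.union_diff_distrib, Set.union_diff_distrib]
  have hdisj1 : Disjoint ((Γ 1 ∩ Γ 3) \ SS) ((Γ 3 ∩ Γ 5) \ SS) := by
    rw [Set.disjoint_left]
    rintro p ⟨⟨m1, m3⟩, hnS⟩ ⟨⟨_, m5⟩, _⟩
    exact hnS ⟨⟨m1, m3⟩, m5⟩
  have hdisj2 : Disjoint (((Γ 1 ∩ Γ 3) \ SS) ∪ ((Γ 3 ∩ Γ 5) \ SS)) ((Γ 1 ∩ Γ 5) \ SS) := by
    rw [Set.disjoint_left]
    rintro p (⟨⟨m1, m3⟩, hnS⟩ | ⟨⟨m3, m5⟩, hnS⟩) ⟨⟨m1', m5'⟩, _⟩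
    · exact hnS ⟨⟨m1, m3⟩, m5'⟩
    · exact hnS ⟨⟨m1', m3⟩, m5⟩
  have hvolUS : volume (U \ SS) = ENNReal.ofReal (s/2) := by
    rw [hUSeq, measure_union hdisj2 (((measG 1).inter (measG 5)).diff measSS),
      measure_union hdisj1 (((measG 3).inter (measG 5)).diff measSS),
      hvRaS, hvRbS, hvRcS,
      ← ENNReal.ofReal_add (by linarith [s3p]) (by linarith [s3p]),
      ← ENNReal.ofReal_add (by linarith [s3p]) (by linarith [s3p])]
    congr 1
    ring
  have hvolU : volume U = ENNReal.ofReal s := by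
    have hU2 : (U \ SS) ∪ SS = U := Set.diff_union_of_subset hSU
    calc volume U = volume ((U \ SS) ∪ SS) := by rw [hU2]
      _ = volume (U \ SS) + volume SS := measure_union Set.disjoint_sdiff_left measSS
      _ = ENNReal.ofReal s := by
          rw [hvolUS, hvolS, ← ENNReal.ofReal_add (by linarith [s3p]) (by linarith [s3p])]
          congr 1
          ring
  have hvolWU : volume (W \ U) = ENNReal.ofReal (s/2) := by
    rw [measure_diff hUW measU.nullMeasurableSet (by rw [hvolU]; exact ENNReal.ofReal_ne_top),
      hvolW, hvolU, ← ENNReal.ofReal_sub _ s3p.le]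
    congr 1
    ring
  have ha4 : a 4 = s / 2 := by
    rw [ha 4, hE4, hvolWU, ENNReal.toReal_ofReal (by linarith [s3p])]
  have ha5 : a 5 = s / 2 := by
    rw [ha 5, hE5, hvolUS, ENNReal.toReal_ofReal (by linarith [s3p])]
  have ha6 : a 6 = s / 2 := by
    rw [ha 6, hE6, hvolS, ENNReal.toReal_ofReal (by linarith [s3p])]
  refine ⟨ha4, ha5, ha6, ?_, ?_⟩
  · rw [ha4, ha5, ha6, hvolW, ENNReal.toReal_ofReal (by linarith [s3p])]
    ring
  · rw [ha4, ha5, ha6]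
    ring
end
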